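/- arXiv:2305.10000 — 3 statements merged into one kernel-verified Lean document; each statement's English description precedes it below -/
import Mathlib

section
/- Let 𝓛: H → ℝ be differentiable, μ-strongly convex with L-Lipschitz gradient, where 0 < μ ≤ L, on a real inner product space H, with global minimizer θ⋆. Fix θ ∈ H and an error vector e ∈ H, and set θ⁺ = θ − (1/L)(∇𝓛(θ) − e). Then 𝓛(θ⁺) − 𝓛(θ⋆) ≤ (1 − μ/L)(𝓛(θ) − 𝓛(θ⋆)) + (1/(2L))‖e‖². -/
open scoped RealInnerProductSpace

section Aux

variable {H : Type*} [NormedAddCommGroup H] [InnerProductSpace ℝ H] [CompleteSpace H]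

/-- Derivative of a function along a line, from its gradient. -/
lemma line_hasDerivAt (𝓛 : H → ℝ) (g : H → H) (hgrad : ∀ x, HasGradientAt 𝓛 (g x) x)
    (x v : H) (t : ℝ) :
    HasDerivAt (fun s : ℝ => 𝓛 (x + s • v)) ⟪g (x + t • v), v⟫ t := by
  have h1 : HasDerivAt (fun s : ℝ => x + s • v) v t := by
    simpa using ((hasDerivAt_id t).smul_const v).const_add x
  have h2 := (hgrad (x + t • v)).hasFDerivAt
  have := h2.comp_hasDerivAt t h1
  simp at this; exact this

/-- Descent lemma: an `L`-Lipschitz-gradient function satisfies the quadratic upper bound. -/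
lemma descent_lemma (𝓛 : H → ℝ) (g : H → H) (L : ℝ) (hL : 0 < L)
    (hgrad : ∀ x, HasGradientAt 𝓛 (g x) x)
    (hlip : ∀ x y, ‖g x - g y‖ ≤ L * ‖x - y‖) (x y : H) :
    𝓛 y ≤ 𝓛 x + ⟪g x, y - x⟫ + (L / 2) * ‖y - x‖ ^ 2 := by
  set v := y - x with hv
  have hglip : LipschitzWith (Real.toNNReal L) g := by
    rw [lipschitzWith_iff_norm_sub_le]
    intro a b
    simpa [Real.coe_toNNReal L hL.le] using hlip a b
  have hcont : Continuous fun t : ℝ => ⟪g (x + t • v), v⟫ := by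
    apply Continuous.inner
    · exact hglip.continuous.comp (by continuity)
    · exact continuous_const
  have hftc : ∫ t in (0:ℝ)..1, ⟪g (x + t • v), v⟫ = 𝓛 (x + (1:ℝ) • v) - 𝓛 (x + (0:ℝ) • v) := by
    exact intervalIntegral.integral_eq_sub_of_hasDerivAt (f := fun s : ℝ => 𝓛 (x + s • v))
      (fun t _ => line_hasDerivAt 𝓛 g hgrad x v t) (hcont.intervalIntegrable 0 1)
  have hbound : ∀ t ∈ Set.Icc (0:ℝ) 1,
      ⟪g (x + t • v), v⟫ ≤ ⟪g x, v⟫ + L * ‖v‖ ^ 2 * t := by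
    intro t ht
    have h1 : ⟪g (x + t • v) - g x, v⟫ ≤ ‖g (x + t • v) - g x‖ * ‖v‖ :=
      real_inner_le_norm _ _
    have h2 : ‖g (x + t • v) - g x‖ ≤ L * (t * ‖v‖) := by
      have := hlip (x + t • v) x
      simpa [norm_smul, abs_of_nonneg ht.1] using this
    have h3 : ‖g (x + t • v) - g x‖ * ‖v‖ ≤ L * (t * ‖v‖) * ‖v‖ :=
      mul_le_mul_of_nonneg_right h2 (norm_nonneg v)
    have h4 : ⟪g (x + t • v), v⟫ - ⟪g x, v⟫ = ⟪g (x + t • v) - g x, v⟫ := by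
      rw [inner_sub_left]
    nlinarith [h1, h3, h4]
  have hint : ∫ t in (0:ℝ)..1, ⟪g (x + t • v), v⟫
      ≤ ∫ t in (0:ℝ)..1, (⟪g x, v⟫ + L * ‖v‖ ^ 2 * t) := by
    apply intervalIntegral.integral_mono_on (by norm_num)
    · exact hcont.intervalIntegrable 0 1
    · exact (Continuous.intervalIntegrable (by continuity) 0 1)
    · exact hbound
  have hval : ∫ t in (0:ℝ)..1, (⟪g x, v⟫ + L * ‖v‖ ^ 2 * t)
      = ⟪g x, v⟫ + (L / 2) * ‖v‖ ^ 2 := by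
    rw [intervalIntegral.integral_add (intervalIntegrable_const)
      ((intervalIntegral.intervalIntegrable_id).const_mul _)]
    rw [intervalIntegral.integral_const_mul, integral_id, intervalIntegral.integral_const]
    norm_num
    ring
  have : 𝓛 (x + (1:ℝ) • v) - 𝓛 (x + (0:ℝ) • v) ≤ ⟪g x, v⟫ + (L / 2) * ‖v‖ ^ 2 := by
    rw [← hftc, ← hval]; exact hint
  simp only [one_smul, zero_smul, add_zero] at this
  have hx : x + v = y := by rw [hv]; abel
  rw [hx] at this
  linarith

end Aux

/-- Single-round contraction inequality (eq. (39) of the paper, deterministic form):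
for a μ-strongly convex function with L-Lipschitz gradient, one noisy gradient step
with learning rate `1/L` contracts the optimality gap by `1 − μ/L` up to `(1/(2L))‖e‖²`. -/
theorem noisy_gd_single_round_contraction
    {H : Type*} [NormedAddCommGroup H] [InnerProductSpace ℝ H] [CompleteSpace H]
    (𝓛 : H → ℝ) (g : H → H) (μ L : ℝ) (hμ : 0 < μ) (hμL : μ ≤ L)
    (hgrad : ∀ x, HasGradientAt 𝓛 (g x) x)
    (hlip : ∀ x y, ‖g x - g y‖ ≤ L * ‖x - y‖)
    (hsc : ∀ x y, 𝓛 y ≥ 𝓛 x + ⟪g x, y - x⟫ + (μ / 2) * ‖y - x‖ ^ 2)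
    (θstar : H) (hmin : ∀ θ', 𝓛 θstar ≤ 𝓛 θ')
    (θ e θplus : H) (hθplus : θplus = θ - (1 / L) • (g θ - e)) :
    𝓛 θplus - 𝓛 θstar ≤ (1 - μ / L) * (𝓛 θ - 𝓛 θstar) + (1 / (2 * L)) * ‖e‖ ^ 2 := by
  have hL : 0 < L := lt_of_lt_of_le hμ hμL
  -- Descent step
  have hdesc := descent_lemma 𝓛 g L hL hgrad hlip θ θplus
  have hdiff : θplus - θ = -((1 / L) • (g θ - e)) := by rw [hθplus]; abel
  have hinner : ⟪g θ, θplus - θ⟫ = -(1 / L) * (‖g θ‖ ^ 2 - ⟪g θ, e⟫) := by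
    rw [hdiff, inner_neg_right, real_inner_smul_right, inner_sub_right,
      real_inner_self_eq_norm_sq]
    ring
  have hnorm : ‖θplus - θ‖ ^ 2 = (1 / L) ^ 2 * (‖g θ‖ ^ 2 - 2 * ⟪g θ, e⟫ + ‖e‖ ^ 2) := by
    rw [hdiff, norm_neg, norm_smul, mul_pow, norm_sub_sq_real, Real.norm_eq_abs, sq_abs]
  -- PL inequality
  have hpl : 2 * μ * (𝓛 θ - 𝓛 θstar) ≤ ‖g θ‖ ^ 2 := by
    have h1 := hsc θ θstar
    have hsq : (0:ℝ) ≤ (μ / 2) * ‖(θstar - θ) + (1 / μ) • g θ‖ ^ 2 := by positivity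
    have hexp : ‖(θstar - θ) + (1 / μ) • g θ‖ ^ 2
        = ‖θstar - θ‖ ^ 2 + 2 * ((1 / μ) * ⟪g θ, θstar - θ⟫) + (1 / μ) ^ 2 * ‖g θ‖ ^ 2 := by
      rw [norm_add_sq_real, real_inner_smul_right, norm_smul, mul_pow, Real.norm_eq_abs,
        sq_abs, real_inner_comm (θstar - θ) (g θ)]
    rw [hexp] at hsq
    have hμne : μ ≠ 0 := ne_of_gt hμ
    have e0 : (μ / 2) * (‖θstar - θ‖ ^ 2 + 2 * ((1 / μ) * ⟪g θ, θstar - θ⟫)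
        + (1 / μ) ^ 2 * ‖g θ‖ ^ 2)
        = (μ / 2) * ‖θstar - θ‖ ^ 2 + ⟪g θ, θstar - θ⟫ + ‖g θ‖ ^ 2 / (2 * μ) := by
      field_simp
    have key : ⟪g θ, θstar - θ⟫ + (μ / 2) * ‖θstar - θ‖ ^ 2 ≥ -(‖g θ‖ ^ 2 / (2 * μ)) := by
      linarith [hsq, e0.le, e0.ge]
    have hd : 𝓛 θ - 𝓛 θstar ≤ ‖g θ‖ ^ 2 / (2 * μ) := by linarith
    have hmul := mul_le_mul_of_nonneg_left hd (by positivity : (0:ℝ) ≤ 2 * μ)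
    have e3 : 2 * μ * (‖g θ‖ ^ 2 / (2 * μ)) = ‖g θ‖ ^ 2 := by field_simp
    linarith [hmul, e3.le, e3.ge]
  -- Combine
  have hstep : 𝓛 θplus ≤ 𝓛 θ - (1 / (2 * L)) * ‖g θ‖ ^ 2 + (1 / (2 * L)) * ‖e‖ ^ 2 := by
    rw [hinner, hnorm] at hdesc
    have hLne : L ≠ 0 := ne_of_gt hL
    have : -(1 / L) * (‖g θ‖ ^ 2 - ⟪g θ, e⟫)
        + (L / 2) * ((1 / L) ^ 2 * (‖g θ‖ ^ 2 - 2 * ⟪g θ, e⟫ + ‖e‖ ^ 2))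
        = -(1 / (2 * L)) * ‖g θ‖ ^ 2 + (1 / (2 * L)) * ‖e‖ ^ 2 := by
      field_simp; ring
    linarith [hdesc, this.le, this.ge]
  have hgap : 0 ≤ 𝓛 θ - 𝓛 θstar := by linarith [hmin θ]
  have h2L : (0:ℝ) < 2 * L := by linarith
  have hfrac : μ / L ≤ 1 := (div_le_one hL).mpr hμL
  have : (1 / (2 * L)) * (2 * μ * (𝓛 θ - 𝓛 θstar)) ≤ (1 / (2 * L)) * ‖g θ‖ ^ 2 :=
    mul_le_mul_of_nonneg_left hpl (by positivity)
  have heq : (1 / (2 * L)) * (2 * μ * (𝓛 θ - 𝓛 θstar)) = (μ / L) * (𝓛 θ - 𝓛 θstar) := by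
    field_simp
  nlinarith [hstep, this, heq.le, heq.ge]
end

section
/- Let Σ_S ∈ ℝ^{n×n} be symmetric positive semidefinite, let c ∈ ℝⁿ, and let Σ_V and Σ̂_V be symmetric positive definite n×n real matrices. Define b̂ = (Σ_S + Σ̂_V)⁻¹ Σ_S c. Then the surrogate value 2 cᵀΣ_S b̂ − b̂ᵀ(Σ_S + Σ_V) b̂ satisfies 2 cᵀΣ_S b̂ − b̂ᵀ(Σ_S + Σ_V) b̂ ≤ cᵀΣ_S (Σ_S + Σ_V)⁻¹ Σ_Sᵀ c for every such Σ_V, with equality when Σ_V = Σ̂_V. -/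
open Matrix

lemma mm_key {n : ℕ} (A : Matrix (Fin n) (Fin n) ℝ) (hA : A.PosDef)
    (w bhat : Fin n → ℝ) :
    2 * (w ⬝ᵥ bhat) - bhat ⬝ᵥ (A *ᵥ bhat) ≤ w ⬝ᵥ (A⁻¹ *ᵥ w) := by
  set b : Fin n → ℝ := A⁻¹ *ᵥ w with hb
  have hAb : A *ᵥ b = w := by
    rw [hb, Matrix.mulVec_mulVec, Matrix.mul_nonsing_inv A
      (isUnit_iff_ne_zero.mpr hA.det_pos.ne'), Matrix.one_mulVec]
  have hsym : Aᵀ = A := by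
    have := hA.isHermitian
    simpa [Matrix.IsHermitian, Matrix.conjTranspose_eq_transpose_of_trivial] using this
  have hnn : 0 ≤ (bhat - b) ⬝ᵥ (A *ᵥ (bhat - b)) := by
    have := hA.posSemidef.dotProduct_mulVec_nonneg (bhat - b)
    simpa using this
  have expand : (bhat - b) ⬝ᵥ (A *ᵥ (bhat - b)) =
      bhat ⬝ᵥ (A *ᵥ bhat) - 2 * (w ⬝ᵥ bhat) + w ⬝ᵥ b := by
    have h1 : b ⬝ᵥ (A *ᵥ bhat) = w ⬝ᵥ bhat := by
      rw [Matrix.dotProduct_mulVec, ← Matrix.mulVec_transpose, hsym, hAb]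
    have h2 : bhat ⬝ᵥ (A *ᵥ b) = w ⬝ᵥ bhat := by
      rw [hAb, dotProduct_comm]
    have h3 : b ⬝ᵥ (A *ᵥ b) = w ⬝ᵥ b := by rw [hAb, dotProduct_comm]
    rw [Matrix.mulVec_sub, dotProduct_sub, sub_dotProduct, sub_dotProduct,
      h1, h2, h3]
    ring
  have : 0 ≤ bhat ⬝ᵥ (A *ᵥ bhat) - 2 * (w ⬝ᵥ bhat) + w ⬝ᵥ b := expand ▸ hnn
  linarith

/-- Minorization property of the MM surrogate objective (problem (37) of the paper):
with `b̂ = (Σ_S + Σ̂_V)⁻¹ Σ_S c` computed at the current point `Σ̂_V`, the surrogate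
`2cᵀΣ_S b̂ − b̂ᵀ(Σ_S + Σ_V)b̂` lower-bounds the original objective
`cᵀΣ_S(Σ_S + Σ_V)⁻¹Σ_Sᵀ c`, with equality at `Σ_V = Σ̂_V`. -/
theorem mm_surrogate_minorization
    {n : ℕ} (SigS : Matrix (Fin n) (Fin n) ℝ) (hS : SigS.PosSemidef)
    (c : Fin n → ℝ) (SigVhat : Matrix (Fin n) (Fin n) ℝ) (hVhat : SigVhat.PosDef)
    (bhat : Fin n → ℝ) (hbhat : bhat = (SigS + SigVhat)⁻¹ *ᵥ (SigS *ᵥ c)) :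
    (∀ SigV : Matrix (Fin n) (Fin n) ℝ, SigV.PosDef →
        2 * (c ⬝ᵥ (SigS *ᵥ bhat)) - bhat ⬝ᵥ ((SigS + SigV) *ᵥ bhat) ≤
          c ⬝ᵥ (SigS *ᵥ ((SigS + SigV)⁻¹ *ᵥ (SigSᵀ *ᵥ c)))) ∧
      2 * (c ⬝ᵥ (SigS *ᵥ bhat)) - bhat ⬝ᵥ ((SigS + SigVhat) *ᵥ bhat) =
        c ⬝ᵥ (SigS *ᵥ ((SigS + SigVhat)⁻¹ *ᵥ (SigSᵀ *ᵥ c))) := by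
  have hSsym : SigSᵀ = SigS := by
    have := hS.isHermitian
    simpa [Matrix.IsHermitian, Matrix.conjTranspose_eq_transpose_of_trivial] using this
  set w : Fin n → ℝ := SigS *ᵥ c with hw
  have hcS : ∀ x : Fin n → ℝ, c ⬝ᵥ (SigS *ᵥ x) = w ⬝ᵥ x := by
    intro x
    rw [Matrix.dotProduct_mulVec, ← Matrix.mulVec_transpose, hSsym]
  have hAhat : (SigS + SigVhat).PosDef := Matrix.PosDef.posSemidef_add hS hVhat
  have hAbhat : (SigS + SigVhat) *ᵥ bhat = w := by
    rw [hbhat, Matrix.mulVec_mulVec, Matrix.mul_nonsing_inv _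
      (isUnit_iff_ne_zero.mpr hAhat.det_pos.ne'), Matrix.one_mulVec]
  constructor
  · intro SigV hV
    have := mm_key (SigS + SigV) (Matrix.PosDef.posSemidef_add hS hV) w bhat
    rw [hcS, hSsym, hcS]
    exact this
  · rw [hcS, hSsym, hcS, hAbhat, hbhat]
    rw [dotProduct_comm ((SigS + SigVhat)⁻¹ *ᵥ w) w]
    ring
end

section
/- Let Σ_S ∈ ℝ^{N_A×N_A} be symmetric positive semidefinite, let Σ_V ∈ ℝ^{N_A×N_A} be symmetric positive definite, and let G ∈ ℝ^{N_A×N_A} be symmetric positive definite. Define χ(G, Σ_V) = (log₂ e / 2)·trace(G⁻¹Σ_V) − (1/2)·log₂(det Σ_V) and ξ(G) = (1/2)·log₂(det G) + (log₂ e / 2)·trace(G⁻¹Σ_S) − (N_A · log₂ e)/2. Then χ(G, Σ_V) + ξ(G) ≥ (1/2)·log₂( det(Σ_S + Σ_V) / det(Σ_V) ), with equality when G = Σ_S + Σ_V. -/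
open Matrix

lemma trace_eq_sum_eigs {n : Type*} [Fintype n] [DecidableEq n]
    {A : Matrix n n ℝ} (hA : A.IsHermitian) :
    A.trace = ∑ i, hA.eigenvalues i := by
  nth_rewrite 1 [hA.spectral_theorem]
  rw [Unitary.conjStarAlgAut_apply, Matrix.trace_mul_cycle, Unitary.coe_star_mul_self, one_mul]
  simp [Matrix.trace_diagonal]

lemma log_det_add_card_le_trace {n : Type*} [Fintype n] [DecidableEq n]
    {M : Matrix n n ℝ} (hM : M.PosSemidef) (hdet : 0 < M.det) :
    Real.log M.det + (Fintype.card n : ℝ) ≤ M.trace := by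
  have hdet' : M.det = ∏ i, hM.1.eigenvalues i := by
    simpa using hM.1.det_eq_prod_eigenvalues
  have hne : ∀ i ∈ Finset.univ, hM.1.eigenvalues i ≠ 0 := by
    intro i _
    intro h
    rw [hdet'] at hdet
    exact absurd (Finset.prod_eq_zero (Finset.mem_univ i) h) (by linarith)
  have hpos : ∀ i, 0 < hM.1.eigenvalues i := fun i =>
    lt_of_le_of_ne (hM.eigenvalues_nonneg i) (Ne.symm (hne i (Finset.mem_univ i)))
  rw [hdet', Real.log_prod hne, trace_eq_sum_eigs hM.1]
  have : (Fintype.card n : ℝ) = ∑ _i : n, (1:ℝ) := by simp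
  rw [this, ← Finset.sum_add_distrib]
  apply Finset.sum_le_sum
  intro i _
  have := Real.log_le_sub_one_of_pos (hpos i)
  linarith

open scoped MatrixOrder in
lemma main_ineq {n : Type*} [Fintype n] [DecidableEq n]
    {A G : Matrix n n ℝ} (hA : A.PosDef) (hG : G.PosDef) :
    Real.log A.det ≤ Real.log G.det + (G⁻¹ * A).trace - (Fintype.card n : ℝ) := by
  have hGi : (G⁻¹).PosDef := hG.inv
  set R := CFC.sqrt (G⁻¹) with hRdef
  have hR : R.PosSemidef := (CFC.sqrt_nonneg _).posSemidef
  have hRR : R * R = G⁻¹ := CFC.sqrt_mul_sqrt_self _ hGi.posSemidef.nonneg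
  have hM : (R * A * R).PosSemidef := by
    have := hA.posSemidef.mul_mul_conjTranspose_same R
    rwa [hR.1.eq] at this
  have htr : (R * A * R).trace = (G⁻¹ * A).trace := by
    rw [Matrix.trace_mul_cycle, hRR]
  have hdetM : (R * A * R).det = A.det / G.det := by
    rw [Matrix.det_mul, Matrix.det_mul, mul_comm R.det, mul_assoc, ← Matrix.det_mul, hRR,
      Matrix.det_nonsing_inv]
    rw [Ring.inverse_eq_inv', div_eq_mul_inv]
  have hdpos : 0 < (R * A * R).det := by
    rw [hdetM]; exact div_pos hA.det_pos hG.det_pos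
  have key := log_det_add_card_le_trace hM hdpos
  rw [htr, hdetM, Real.log_div (ne_of_gt hA.det_pos) (ne_of_gt hG.det_pos)] at key
  linarith

/-- The surrogate sum-rate constraint of the MM step (problem (37)) is at least as tight
as the original sum-rate constraint of Lemma 1:
`χ(G,Σ_V) + ξ(G) ≥ (1/2)log₂(det(Σ_S+Σ_V)/det Σ_V)`, with equality when `G = Σ_S + Σ_V`. -/
theorem mm_surrogate_rate_constraint
    {NA : ℕ} (SigS SigV G : Matrix (Fin NA) (Fin NA) ℝ)
    (hS : SigS.PosSemidef) (hV : SigV.PosDef) (hG : G.PosDef) :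
    ((Real.logb 2 (Real.exp 1) / 2) * (G⁻¹ * SigV).trace -
        (1 / 2) * Real.logb 2 SigV.det +
      ((1 / 2) * Real.logb 2 G.det +
        (Real.logb 2 (Real.exp 1) / 2) * (G⁻¹ * SigS).trace -
        ((NA : ℝ) * Real.logb 2 (Real.exp 1)) / 2) ≥
      (1 / 2) * Real.logb 2 ((SigS + SigV).det / SigV.det)) ∧
    (G = SigS + SigV →
      (Real.logb 2 (Real.exp 1) / 2) * (G⁻¹ * SigV).trace -
          (1 / 2) * Real.logb 2 SigV.det +
        ((1 / 2) * Real.logb 2 G.det +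
          (Real.logb 2 (Real.exp 1) / 2) * (G⁻¹ * SigS).trace -
          ((NA : ℝ) * Real.logb 2 (Real.exp 1)) / 2) =
        (1 / 2) * Real.logb 2 ((SigS + SigV).det / SigV.det)) := by
  have hA : (SigS + SigV).PosDef := Matrix.PosDef.posSemidef_add hS hV
  have hl2 : (0:ℝ) < Real.log 2 := Real.log_pos (by norm_num)
  have hcard : (Fintype.card (Fin NA) : ℝ) = (NA : ℝ) := by simp
  have hsum : (G⁻¹ * (SigS + SigV)).trace = (G⁻¹ * SigS).trace + (G⁻¹ * SigV).trace := by
    rw [mul_add, Matrix.trace_add]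
  constructor
  · have key := main_ineq hA hG
    rw [hcard, hsum] at key
    rw [ge_iff_le, ← sub_nonneg]
    have hrw :
        (Real.logb 2 (Real.exp 1) / 2) * (G⁻¹ * SigV).trace -
            (1 / 2) * Real.logb 2 SigV.det +
          ((1 / 2) * Real.logb 2 G.det +
            (Real.logb 2 (Real.exp 1) / 2) * (G⁻¹ * SigS).trace -
            ((NA : ℝ) * Real.logb 2 (Real.exp 1)) / 2) -
          (1 / 2) * Real.logb 2 ((SigS + SigV).det / SigV.det) =
        ((Real.log G.det + ((G⁻¹ * SigS).trace + (G⁻¹ * SigV).trace) - (NA : ℝ)) -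
            Real.log (SigS + SigV).det) / (2 * Real.log 2) := by
      rw [Real.logb, Real.logb, Real.logb, Real.logb, Real.log_exp,
        Real.log_div (ne_of_gt hA.det_pos) (ne_of_gt hV.det_pos)]
      field_simp
      ring
    rw [hrw]
    exact div_nonneg (by linarith) (by positivity)
  · intro hGeq
    subst hGeq
    have htrN : ((SigS + SigV)⁻¹ * SigS).trace + ((SigS + SigV)⁻¹ * SigV).trace = (NA : ℝ) := by
      rw [← hsum, Matrix.nonsing_inv_mul _ (ne_of_gt hA.det_pos).isUnit, Matrix.trace_one]
      simp
    rw [Real.logb_div (ne_of_gt hA.det_pos) (ne_of_gt hV.det_pos)]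
    have h0 : Real.logb 2 (Real.exp 1) / 2 * ((SigS + SigV)⁻¹ * SigV).trace +
        Real.logb 2 (Real.exp 1) / 2 * ((SigS + SigV)⁻¹ * SigS).trace -
        (NA : ℝ) * Real.logb 2 (Real.exp 1) / 2 = 0 := by
      rw [← htrN]; ring
    linarith
end
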